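/- arXiv:1103.1365 — 3 statements merged into one kernel-verified Lean document; each statement's English description precedes it below -/
import Mathlib

section
/- (Open-loop convergence, Theorem 1, part 1.) Let (Ω, F, P) be a probability space with a filtration (F_k)_{k∈ℕ}, and let (ρ_k)_{k∈ℕ} be an adapted D-valued process such that for every k and every bounded measurable f : D → ℝ, E[f(ρ_{k+1}) | F_k] = Σ_{μ : p_{μ,ρ_k} > 0} p_{μ,ρ_k} f(𝕄_μ(ρ_k)) almost surely. Under the QND assumption and the distinguishability assumption, with probability one the sequence ρ_k converges (entrywise) to a limit of the form |n⟩⟨n| for some n ∈ {1,…,d}. -/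
/-!
Under the QND assumption a measurement only rescales the populations `ρ n n` by
`|c μ n|² / p_μ`, so each population is a bounded martingale and converges almost surely.
For `n₁ ≠ n₂` the geometric mean `√(ρ n₁ n₁ · ρ n₂ n₂)` is a contracting supermartingale: its
conditional expectation is at most `γ = ∑ μ, |c μ n₁| |c μ n₂|` times its current value, and
`γ < 1` by AM-GM and distinguishability. Hence its expectation decays like `γ ^ k`, which is
summable, so it tends to `0` almost surely. The limiting populations therefore sum to `1` and are
pairwise orthogonal, i.e. form a basis vector `e_n`, and the coherences are dominated by the
geometric means (`|ρ i j|² ≤ ρ i i ρ j j`), so `ρ_k → |n⟩⟨n|`.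
-/

open Matrix MeasureTheory Filter BigOperators
open scoped ComplexOrder

/-- The (Borel) measurable space structure on matrices, coming from the product structure. -/
noncomputable instance matrixMeasurableSpace {d : ℕ} :
    MeasurableSpace (Matrix (Fin d) (Fin d) ℂ) :=
  (inferInstance : MeasurableSpace (Fin d → Fin d → ℂ))

/-- `p_{μ,ρ} = tr(M_μ ρ M_μ†)` (a real number since `ρ` is positive semidefinite). -/
noncomputable def pMeas {d m : ℕ} (M : Fin m → Matrix (Fin d) (Fin d) ℂ)
    (ρ : Matrix (Fin d) (Fin d) ℂ) (μ : Fin m) : ℝ :=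
  ((M μ * ρ * (M μ)ᴴ).trace).re

/-- `𝕄_μ(ρ) = M_μ ρ M_μ† / tr(M_μ ρ M_μ†)`. -/
noncomputable def MMap {d m : ℕ} (M : Fin m → Matrix (Fin d) (Fin d) ℂ)
    (μ : Fin m) (ρ : Matrix (Fin d) (Fin d) ℂ) : Matrix (Fin d) (Fin d) ℂ :=
  ((pMeas M ρ μ : ℂ))⁻¹ • (M μ * ρ * (M μ)ᴴ)

open Topology

namespace Matrix

variable {ι : Type*} {A : Matrix ι ι ℂ}

lemma sum_re_apply_self_of_trace_eq_one [Fintype ι] (htr : A.trace = 1) :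
    ∑ i, (A i i).re = 1 := by
  simpa [trace, Complex.re_sum] using congrArg Complex.re htr

namespace PosSemidef

lemma re_apply_self_nonneg (hA : A.PosSemidef) (i : ι) : 0 ≤ (A i i).re :=
  (Complex.nonneg_iff.mp hA.diag_nonneg).1

lemma normSq_apply_le (hA : A.PosSemidef) (i j : ι) :
    Complex.normSq (A i j) ≤ (A i i).re * (A j j).re := by
  classical
  have hdet := (hA.submatrix ![i, j]).det_nonneg
  rw [det_fin_two] at hdet
  simp only [submatrix_apply, Matrix.cons_val_zero, Matrix.cons_val_one] at hdet
  have hii : (A i i).im = 0 := (Complex.nonneg_iff.mp hA.diag_nonneg).2.symm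
  have hjj : (A j j).im = 0 := (Complex.nonneg_iff.mp hA.diag_nonneg).2.symm
  rw [← hA.isHermitian.apply j i, Complex.star_def, Complex.mul_conj] at hdet
  have := (Complex.nonneg_iff.mp hdet).1
  simp only [Complex.sub_re, Complex.mul_re, hii, hjj, Complex.ofReal_re] at this
  linarith

lemma re_apply_self_le_one [Fintype ι] (hA : A.PosSemidef) (htr : A.trace = 1) (i : ι) :
    (A i i).re ≤ 1 := by
  rw [← sum_re_apply_self_of_trace_eq_one htr]
  exact Finset.single_le_sum (fun j _ => hA.re_apply_self_nonneg j) (Finset.mem_univ i)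

end PosSemidef

end Matrix

section Measurement

variable {d m : ℕ} (M : Fin m → Matrix (Fin d) (Fin d) ℂ) {ρ : Matrix (Fin d) (Fin d) ℂ}

lemma ofReal_pMeas (hρ : ρ.PosSemidef) (μ : Fin m) :
    (pMeas M ρ μ : ℂ) = (M μ * ρ * (M μ)ᴴ).trace := by
  obtain ⟨-, him⟩ := Complex.nonneg_iff.mp (hρ.mul_mul_conjTranspose_same (M μ)).trace_nonneg
  exact Complex.ext (by simp [pMeas]) (by simpa using him)

lemma pMeas_nonneg (hρ : ρ.PosSemidef) (μ : Fin m) : 0 ≤ pMeas M ρ μ :=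
  (Complex.nonneg_iff.mp (hρ.mul_mul_conjTranspose_same (M μ)).trace_nonneg).1

lemma posSemidef_MMap (hρ : ρ.PosSemidef) (μ : Fin m) : (MMap M μ ρ).PosSemidef :=
  (hρ.mul_mul_conjTranspose_same (M μ)).smul
    (by exact_mod_cast inv_nonneg.mpr (pMeas_nonneg M hρ μ))

lemma trace_MMap (hρ : ρ.PosSemidef) {μ : Fin m} (hp : pMeas M ρ μ ≠ 0) :
    (MMap M μ ρ).trace = 1 := by
  rw [MMap, trace_smul, ← ofReal_pMeas M hρ, smul_eq_mul,
    inv_mul_cancel₀ (Complex.ofReal_ne_zero.mpr hp)]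

end Measurement

lemma re_diagonal_mul_mul_conjTranspose_apply_self {ι : Type*} [Fintype ι] [DecidableEq ι]
    (c : ι → ℂ) (ρ : Matrix ι ι ℂ) (n : ι) :
    ((diagonal c * ρ * (diagonal c)ᴴ) n n).re = Complex.normSq (c n) * (ρ n n).re := by
  rw [diagonal_conjTranspose, mul_diagonal, diagonal_mul, Pi.star_apply, Complex.star_def,
    mul_right_comm, Complex.mul_conj, Complex.re_ofReal_mul]

section QND

variable {d m : ℕ} {M : Fin m → Matrix (Fin d) (Fin d) ℂ} {c : Fin m → Fin d → ℂ}
  {ρ : Matrix (Fin d) (Fin d) ℂ}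

lemma pMeas_eq_sum (hQND : ∀ μ, M μ = diagonal (c μ)) (μ : Fin m) :
    pMeas M ρ μ = ∑ n, Complex.normSq (c μ n) * (ρ n n).re := by
  simp only [pMeas, trace, diag_apply, Complex.re_sum, hQND,
    re_diagonal_mul_mul_conjTranspose_apply_self]

lemma pMeas_mul_re_MMap_apply_self (hQND : ∀ μ, M μ = diagonal (c μ)) {μ : Fin m}
    (hp : pMeas M ρ μ ≠ 0) (n : Fin d) :
    pMeas M ρ μ * (MMap M μ ρ n n).re = Complex.normSq (c μ n) * (ρ n n).re := by
  rw [MMap, Matrix.smul_apply, smul_eq_mul, ← Complex.ofReal_inv, Complex.re_ofReal_mul,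
    ← mul_assoc, mul_inv_cancel₀ hp, one_mul, hQND, re_diagonal_mul_mul_conjTranspose_apply_self]

lemma sum_normSq_eq_one (hQND : ∀ μ, M μ = diagonal (c μ))
    (hKraus : ∑ μ, (M μ)ᴴ * M μ = 1) (n : Fin d) :
    ∑ μ, Complex.normSq (c μ n) = 1 := by
  have h := congrArg (fun A : Matrix (Fin d) (Fin d) ℂ => (A n n).re) hKraus
  simpa [Matrix.sum_apply, hQND, Complex.re_sum, Complex.normSq_apply] using h

end QND

lemma sum_sqrt_mul_lt_one {ι : Type*} [Fintype ι] {a b : ι → ℝ} (ha : 0 ≤ a) (hb : 0 ≤ b)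
    (hsa : ∑ i, a i = 1) (hsb : ∑ i, b i = 1) (hne : ∃ i, a i ≠ b i) :
    ∑ i, √(a i * b i) < 1 := by
  obtain ⟨i₀, hi₀⟩ := hne
  have hgap (i : ι) : (a i + b i) / 2 - √(a i * b i) = (√(a i) - √(b i)) ^ 2 / 2 := by
    rw [Real.sqrt_mul (ha i)]
    linear_combination -(Real.sq_sqrt (ha i) + Real.sq_sqrt (hb i)) / 2
  have hsqrt_ne : √(a i₀) ≠ √(b i₀) := (Real.sqrt_inj (ha i₀) (hb i₀)).not.mpr hi₀
  calc ∑ i, √(a i * b i) < ∑ i, (a i + b i) / 2 := by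
        refine Finset.sum_lt_sum (fun i _ => sub_nonneg.mp ?_)
          ⟨i₀, Finset.mem_univ _, sub_pos.mp ?_⟩
        · rw [hgap]; positivity
        · rw [hgap]; have := sub_ne_zero.mpr hsqrt_ne; positivity
    _ = 1 := by rw [← Finset.sum_div, Finset.sum_add_distrib, hsa, hsb]; norm_num

section Observables

variable {d m : ℕ}

noncomputable def stepExpectation (M : Fin m → Matrix (Fin d) (Fin d) ℂ)
    (f : Matrix (Fin d) (Fin d) ℂ → ℝ) (ρ : Matrix (Fin d) (Fin d) ℂ) : ℝ :=
  ∑ μ, if 0 < pMeas M ρ μ then pMeas M ρ μ * f (MMap M μ ρ) else 0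

-- Clamped to `[0, 1]` to make it a bounded observable on all matrices; on density matrices it is
-- the population `(ρ n n).re`.
noncomputable def clampedDiag (n : Fin d) (ρ : Matrix (Fin d) (Fin d) ℂ) : ℝ :=
  max 0 (min 1 (ρ n n).re)

noncomputable def diagGeomMean (n₁ n₂ : Fin d) (ρ : Matrix (Fin d) (Fin d) ℂ) : ℝ :=
  √(clampedDiag n₁ ρ * clampedDiag n₂ ρ)

lemma measurable_clampedDiag (n : Fin d) : Measurable (clampedDiag n) :=
  measurable_const.max <| measurable_const.min <|
    Complex.measurable_re.comp ((measurable_pi_apply n).comp (measurable_pi_apply n))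

lemma measurable_diagGeomMean (n₁ n₂ : Fin d) : Measurable (diagGeomMean n₁ n₂) :=
  ((measurable_clampedDiag n₁).mul (measurable_clampedDiag n₂)).sqrt

lemma clampedDiag_mem_Icc (n : Fin d) (ρ : Matrix (Fin d) (Fin d) ℂ) :
    clampedDiag n ρ ∈ Set.Icc 0 1 :=
  ⟨le_max_left _ _, max_le zero_le_one (min_le_left _ _)⟩

lemma abs_clampedDiag_le_one (n : Fin d) (ρ : Matrix (Fin d) (Fin d) ℂ) :
    |clampedDiag n ρ| ≤ 1 :=
  (abs_of_nonneg (clampedDiag_mem_Icc n ρ).1).trans_le (clampedDiag_mem_Icc n ρ).2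

lemma diagGeomMean_mem_Icc (n₁ n₂ : Fin d) (ρ : Matrix (Fin d) (Fin d) ℂ) :
    diagGeomMean n₁ n₂ ρ ∈ Set.Icc 0 1 := by
  obtain ⟨h₁, h₁'⟩ := clampedDiag_mem_Icc n₁ ρ
  obtain ⟨h₂, h₂'⟩ := clampedDiag_mem_Icc n₂ ρ
  exact ⟨Real.sqrt_nonneg _, Real.sqrt_le_one.mpr (mul_le_one₀ h₁' h₂ h₂')⟩

lemma abs_diagGeomMean_le_one (n₁ n₂ : Fin d) (ρ : Matrix (Fin d) (Fin d) ℂ) :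
    |diagGeomMean n₁ n₂ ρ| ≤ 1 :=
  (abs_of_nonneg (diagGeomMean_mem_Icc n₁ n₂ ρ).1).trans_le (diagGeomMean_mem_Icc n₁ n₂ ρ).2

variable {ρ : Matrix (Fin d) (Fin d) ℂ}

lemma clampedDiag_of_density (hρ : ρ.PosSemidef) (htr : ρ.trace = 1) (n : Fin d) :
    clampedDiag n ρ = (ρ n n).re := by
  rw [clampedDiag, min_eq_right (hρ.re_apply_self_le_one htr n),
    max_eq_right (hρ.re_apply_self_nonneg n)]

lemma diagGeomMean_of_density (hρ : ρ.PosSemidef) (htr : ρ.trace = 1) (n₁ n₂ : Fin d) :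
    diagGeomMean n₁ n₂ ρ = √((ρ n₁ n₁).re * (ρ n₂ n₂).re) := by
  rw [diagGeomMean, clampedDiag_of_density hρ htr, clampedDiag_of_density hρ htr]

variable {M : Fin m → Matrix (Fin d) (Fin d) ℂ} {c : Fin m → Fin d → ℂ}

lemma pMeas_mul_clampedDiag_MMap (hQND : ∀ μ, M μ = diagonal (c μ)) (hρ : ρ.PosSemidef)
    {μ : Fin m} (hp : 0 < pMeas M ρ μ) (n : Fin d) :
    pMeas M ρ μ * clampedDiag n (MMap M μ ρ) = Complex.normSq (c μ n) * (ρ n n).re := by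
  rw [clampedDiag_of_density (posSemidef_MMap M hρ μ) (trace_MMap M hρ hp.ne'),
    pMeas_mul_re_MMap_apply_self hQND hp.ne']

lemma stepExpectation_clampedDiag (hQND : ∀ μ, M μ = diagonal (c μ))
    (hKraus : ∑ μ, (M μ)ᴴ * M μ = 1) (hρ : ρ.PosSemidef) (n : Fin d) :
    stepExpectation M (clampedDiag n) ρ = (ρ n n).re := by
  have hterm (μ : Fin m) : (if 0 < pMeas M ρ μ then pMeas M ρ μ * clampedDiag n (MMap M μ ρ)
      else 0) = Complex.normSq (c μ n) * (ρ n n).re := by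
    split_ifs with hp
    · exact pMeas_mul_clampedDiag_MMap hQND hρ hp n
    · -- `pMeas` is a sum of nonnegative terms, one of which is the right-hand side
      have hle : Complex.normSq (c μ n) * (ρ n n).re ≤ pMeas M ρ μ := by
        rw [pMeas_eq_sum hQND]
        exact Finset.single_le_sum (f := fun n => Complex.normSq (c μ n) * (ρ n n).re)
          (fun i _ => mul_nonneg (Complex.normSq_nonneg _) (hρ.re_apply_self_nonneg i))
          (Finset.mem_univ n)
      have := mul_nonneg (Complex.normSq_nonneg (c μ n)) (hρ.re_apply_self_nonneg n)
      linarith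
  rw [stepExpectation, Finset.sum_congr rfl fun μ _ => hterm μ, ← Finset.sum_mul,
    sum_normSq_eq_one hQND hKraus, one_mul]

lemma stepExpectation_diagGeomMean_le (hQND : ∀ μ, M μ = diagonal (c μ)) (hρ : ρ.PosSemidef)
    (n₁ n₂ : Fin d) :
    stepExpectation M (diagGeomMean n₁ n₂) ρ ≤
      (∑ μ, √(Complex.normSq (c μ n₁) * Complex.normSq (c μ n₂))) *
        √((ρ n₁ n₁).re * (ρ n₂ n₂).re) := by
  rw [stepExpectation, Finset.sum_mul]
  refine Finset.sum_le_sum fun μ _ => ?_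
  split_ifs with hp
  · -- in fact equality: `p √(g₁ g₂) = √((p g₁) (p g₂))`
    rw [diagGeomMean, ← Real.sqrt_mul_self hp.le, ← Real.sqrt_mul (mul_self_nonneg _),
      ← Real.sqrt_mul (mul_nonneg (Complex.normSq_nonneg _) (Complex.normSq_nonneg _))]
    refine le_of_eq (congrArg _ ?_)
    have h₁ := pMeas_mul_clampedDiag_MMap hQND hρ hp n₁
    have h₂ := pMeas_mul_clampedDiag_MMap hQND hρ hp n₂
    linear_combination (pMeas M ρ μ * clampedDiag n₂ (MMap M μ ρ)) * h₁ +
      Complex.normSq (c μ n₁) * (ρ n₁ n₁).re * h₂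
  · positivity

end Observables

namespace MeasureTheory

variable {Ω : Type*} {m0 : MeasurableSpace Ω} {P : Measure Ω}

lemma ae_tendsto_zero_of_summable_integral {Z : ℕ → Ω → ℝ} (hZ : ∀ k, Integrable (Z k) P)
    (hnn : ∀ k ω, 0 ≤ Z k ω) (hsum : Summable fun k => ∫ ω, Z k ω ∂P) :
    ∀ᵐ ω ∂P, Tendsto (fun k => Z k ω) atTop (𝓝 0) := by
  have heLp (k : ℕ) : eLpNorm (Z k) 1 P = ENNReal.ofReal (∫ ω, Z k ω ∂P) := by
    rw [eLpNorm_one_eq_lintegral_enorm, ← ofReal_integral_norm_eq_lintegral_enorm (hZ k)]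
    simp only [Real.norm_of_nonneg (hnn k _)]
  have hfin : ∑' k, eLpNorm (Z k) 1 P ≠ ⊤ := by
    simp only [heLp]
    rw [← ENNReal.ofReal_tsum_of_nonneg (fun k => integral_nonneg (hnn k)) hsum]
    exact ENNReal.ofReal_ne_top
  filter_upwards [summable_norm_of_tsum_eLpNorm_ne_top le_rfl (fun k => (hZ k).1) hfin]
    with ω hω
  exact tendsto_zero_iff_norm_tendsto_zero.mpr hω.tendsto_atTop_zero

end MeasureTheory

section Trajectory

variable {d m : ℕ} {M : Fin m → Matrix (Fin d) (Fin d) ℂ}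
  {Ω : Type*} {m0 : MeasurableSpace Ω} {P : Measure Ω}
  {ℱ : Filtration ℕ m0} {X : ℕ → Ω → Matrix (Fin d) (Fin d) ℂ}
  {f : Matrix (Fin d) (Fin d) ℂ → ℝ} {C : ℝ}

def HasStepExpectation (P : Measure Ω) (ℱ : Filtration ℕ m0)
    (X : ℕ → Ω → Matrix (Fin d) (Fin d) ℂ) (M : Fin m → Matrix (Fin d) (Fin d) ℂ)
    (f : Matrix (Fin d) (Fin d) ℂ → ℝ) : Prop :=
  ∀ k, P[fun ω => f (X (k + 1) ω) | ℱ k] =ᵐ[P] fun ω => stepExpectation M f (X k ω)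

lemma integrable_comp_of_bounded [IsFiniteMeasure P] (hX : Adapted ℱ X) (hf : Measurable f)
    (hb : ∀ ρ, |f ρ| ≤ C) (k : ℕ) : Integrable (fun ω => f (X k ω)) P :=
  .of_bound (hf.comp ((hX k).mono (ℱ.le k) le_rfl)).aestronglyMeasurable C
    (.of_forall fun ω => hb (X k ω))

lemma ae_exists_tendsto_of_stepExpectation_eq [IsProbabilityMeasure P] (hX : Adapted ℱ X)
    (hf : Measurable f) (hb : ∀ ρ, |f ρ| ≤ C) (hstep : HasStepExpectation P ℱ X M f)
    (hharm : ∀ k ω, stepExpectation M f (X k ω) = f (X k ω)) :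
    ∀ᵐ ω ∂P, ∃ l, Tendsto (fun k => f (X k ω)) atTop (𝓝 l) := by
  have hmart : Martingale (fun k ω => f (X k ω)) ℱ P :=
    martingale_nat (fun k => (hf.comp (hX k)).stronglyMeasurable)
      (integrable_comp_of_bounded hX hf hb) fun k => by
        simpa only [hharm] using (hstep k).symm
  refine hmart.submartingale.exists_ae_tendsto_of_bdd (R := C.toNNReal) fun k => ?_
  simpa [ENNReal.ofReal] using
    eLpNorm_le_of_ae_bound (p := 1) (μ := P) (f := fun ω => f (X k ω))
      (.of_forall fun ω => hb (X k ω))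

lemma integral_comp_succ_le [IsFiniteMeasure P] (hX : Adapted ℱ X) (hf : Measurable f)
    (hb : ∀ ρ, |f ρ| ≤ C) (hstep : HasStepExpectation P ℱ X M f) {γ : ℝ}
    (hle : ∀ k ω, stepExpectation M f (X k ω) ≤ γ * f (X k ω)) (k : ℕ) :
    ∫ ω, f (X (k + 1) ω) ∂P ≤ γ * ∫ ω, f (X k ω) ∂P :=
  calc ∫ ω, f (X (k + 1) ω) ∂P
      = ∫ ω, (P[fun ω => f (X (k + 1) ω) | ℱ k]) ω ∂P := (integral_condExp (ℱ.le k)).symm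
    _ = ∫ ω, stepExpectation M f (X k ω) ∂P := integral_congr_ae (hstep k)
    _ ≤ ∫ ω, γ * f (X k ω) ∂P :=
        integral_mono (integrable_condExp.congr (hstep k))
          ((integrable_comp_of_bounded hX hf hb k).const_mul γ) fun ω => hle k ω
    _ = γ * ∫ ω, f (X k ω) ∂P := integral_const_mul γ _

lemma ae_tendsto_zero_of_stepExpectation_le [IsFiniteMeasure P] (hX : Adapted ℱ X)
    (hf : Measurable f) (hb : ∀ ρ, |f ρ| ≤ C) (hnn : 0 ≤ f) (hstep : HasStepExpectation P ℱ X M f)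
    {γ : ℝ} (hγ₀ : 0 ≤ γ) (hγ₁ : γ < 1)
    (hle : ∀ k ω, stepExpectation M f (X k ω) ≤ γ * f (X k ω)) :
    ∀ᵐ ω ∂P, Tendsto (fun k => f (X k ω)) atTop (𝓝 0) := by
  have hgeom (k : ℕ) : ∫ ω, f (X k ω) ∂P ≤ (∫ ω, f (X 0 ω) ∂P) * γ ^ k := by
    induction k with
    | zero => simp
    | succ k ih =>
      calc ∫ ω, f (X (k + 1) ω) ∂P ≤ γ * ∫ ω, f (X k ω) ∂P :=
            integral_comp_succ_le hX hf hb hstep hle k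
        _ ≤ γ * ((∫ ω, f (X 0 ω) ∂P) * γ ^ k) := mul_le_mul_of_nonneg_left ih hγ₀
        _ = (∫ ω, f (X 0 ω) ∂P) * γ ^ (k + 1) := by ring
  exact ae_tendsto_zero_of_summable_integral (integrable_comp_of_bounded hX hf hb)
    (fun k ω => hnn _)
    (Summable.of_nonneg_of_le (fun k => integral_nonneg fun ω => hnn _) hgeom
      ((summable_geometric_of_lt_one hγ₀ hγ₁).mul_left _))

variable {c : Fin m → Fin d → ℂ} [IsProbabilityMeasure P]

lemma ae_exists_tendsto_re_apply_self (hQND : ∀ μ, M μ = diagonal (c μ))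
    (hKraus : ∑ μ, (M μ)ᴴ * M μ = 1) (hX : Adapted ℱ X)
    (hD : ∀ k ω, (X k ω).PosSemidef ∧ (X k ω).trace = 1)
    (hmarkov : ∀ f, Measurable f → (∃ C, ∀ ρ, |f ρ| ≤ C) → HasStepExpectation P ℱ X M f)
    (n : Fin d) :
    ∀ᵐ ω ∂P, ∃ l, Tendsto (fun k => (X k ω n n).re) atTop (𝓝 l) := by
  have hb := abs_clampedDiag_le_one n
  simpa only [clampedDiag_of_density (hD _ _).1 (hD _ _).2] using
    ae_exists_tendsto_of_stepExpectation_eq hX (measurable_clampedDiag n) hb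
      (hmarkov _ (measurable_clampedDiag n) ⟨1, hb⟩) fun k ω => by
        rw [stepExpectation_clampedDiag hQND hKraus (hD k ω).1,
          clampedDiag_of_density (hD k ω).1 (hD k ω).2]

lemma ae_tendsto_sqrt_re_mul_re_zero (hQND : ∀ μ, M μ = diagonal (c μ))
    (hKraus : ∑ μ, (M μ)ᴴ * M μ = 1) (hX : Adapted ℱ X)
    (hD : ∀ k ω, (X k ω).PosSemidef ∧ (X k ω).trace = 1)
    (hmarkov : ∀ f, Measurable f → (∃ C, ∀ ρ, |f ρ| ≤ C) → HasStepExpectation P ℱ X M f)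
    {n₁ n₂ : Fin d} (hdist : ∃ μ, Complex.normSq (c μ n₁) ≠ Complex.normSq (c μ n₂)) :
    ∀ᵐ ω ∂P, Tendsto (fun k => √((X k ω n₁ n₁).re * (X k ω n₂ n₂).re)) atTop (𝓝 0) := by
  have hb := abs_diagGeomMean_le_one n₁ n₂
  have hγ := sum_sqrt_mul_lt_one (fun μ => Complex.normSq_nonneg (c μ n₁))
    (fun μ => Complex.normSq_nonneg (c μ n₂)) (sum_normSq_eq_one hQND hKraus n₁)
    (sum_normSq_eq_one hQND hKraus n₂) hdist
  simpa only [diagGeomMean_of_density (hD _ _).1 (hD _ _).2] using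
    ae_tendsto_zero_of_stepExpectation_le hX (measurable_diagGeomMean n₁ n₂) hb
      (fun ρ => (diagGeomMean_mem_Icc n₁ n₂ ρ).1)
      (hmarkov _ (measurable_diagGeomMean n₁ n₂) ⟨1, hb⟩)
      (Finset.sum_nonneg fun μ _ => Real.sqrt_nonneg _) hγ fun k ω => by
        rw [diagGeomMean_of_density (hD k ω).1 (hD k ω).2]
        exact stepExpectation_diagGeomMean_le hQND (hD k ω).1 n₁ n₂

end Trajectory

lemma exists_eq_piSingle_of_sum_eq_one {ι : Type*} [Fintype ι] [DecidableEq ι] {l : ι → ℝ}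
    (hsum : ∑ i, l i = 1) (horth : ∀ i j, i ≠ j → l i * l j = 0) :
    ∃ n, l = Pi.single n 1 := by
  obtain ⟨n, hn⟩ : ∃ n, l n ≠ 0 := by
    by_contra! h
    simp [h] at hsum
  have hzero (i : ι) (hi : i ≠ n) : l i = 0 :=
    (mul_eq_zero.mp (horth i n hi)).resolve_right hn
  have hone : l n = 1 := by
    rwa [Finset.sum_eq_single n (fun i _ hi => hzero i hi) (by simp)] at hsum
  refine ⟨n, funext fun i => ?_⟩
  by_cases hi : i = n
  · subst hi; simpa using hone
  · simp [hi, hzero i hi]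

lemma exists_tendsto_single_of_tendsto_diag {ι : Type*} [Fintype ι] [DecidableEq ι]
    {ρ : ℕ → Matrix ι ι ℂ} (hρ : ∀ k, (ρ k).PosSemidef ∧ (ρ k).trace = 1)
    (hdiag : ∀ n, ∃ l, Tendsto (fun k => (ρ k n n).re) atTop (𝓝 l))
    (hoff : ∀ i j, i ≠ j → Tendsto (fun k => √((ρ k i i).re * (ρ k j j).re)) atTop (𝓝 0)) :
    ∃ n, Tendsto ρ atTop (𝓝 (single n n 1)) := by
  choose l hl using hdiag
  have hsum : ∑ i, l i = 1 :=
    tendsto_nhds_unique (tendsto_finsetSum _ fun i _ => hl i)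
      (by simp [sum_re_apply_self_of_trace_eq_one (hρ _).2])
  have horth (i j : ι) (hij : i ≠ j) : l i * l j = 0 := by
    refine tendsto_nhds_unique ((hl i).mul (hl j)) ?_
    have hsq := (hoff i j hij).pow 2
    refine (hsq.congr fun k => ?_).trans (by simp)
    exact Real.sq_sqrt (mul_nonneg ((hρ k).1.re_apply_self_nonneg i)
      ((hρ k).1.re_apply_self_nonneg j))
  obtain ⟨n, hn⟩ := exists_eq_piSingle_of_sum_eq_one hsum horth
  refine ⟨n, tendsto_pi_nhds.mpr fun i => tendsto_pi_nhds.mpr fun j => ?_⟩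
  show Tendsto (fun k => ρ k i j) atTop (𝓝 (single n n (1 : ℂ) i j))
  by_cases hij : i = j
  · subst hij
    have hre : Tendsto (fun k => ρ k i i) atTop (𝓝 (l i : ℂ)) :=
      ((Complex.continuous_ofReal.tendsto _).comp (hl i)).congr fun k =>
        (hρ k).1.isHermitian.coe_re_apply_self i
    by_cases hin : i = n
    · subst hin; simpa [hn] using hre
    · simpa [hn, hin, Ne.symm hin] using hre
  · rw [show single n n (1 : ℂ) i j = 0 from
      single_apply_of_ne _ _ _ _ _ fun h => hij (h.1.symm.trans h.2)]
    refine squeeze_zero_norm (fun k => ?_) (hoff i j hij)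
    rw [Complex.norm_def]
    exact Real.sqrt_le_sqrt ((hρ k).1.normSq_apply_le i j)

theorem stmt_5_general (d m : ℕ)
    (M : Fin m → Matrix (Fin d) (Fin d) ℂ) (c : Fin m → Fin d → ℂ)
    (hQND : ∀ μ, M μ = Matrix.diagonal (c μ))
    (hKraus : ∑ μ, (M μ)ᴴ * M μ = 1)
    (hdist : ∀ n₁ n₂ : Fin d, n₁ ≠ n₂ →
      ∃ μ, Complex.normSq (c μ n₁) ≠ Complex.normSq (c μ n₂))
    (Ω : Type*) (m0 : MeasurableSpace Ω) (P : Measure Ω) [IsProbabilityMeasure P]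
    (ℱ : Filtration ℕ m0)
    (X : ℕ → Ω → Matrix (Fin d) (Fin d) ℂ)
    (hadapted : Adapted ℱ X)
    (hD : ∀ k ω, (X k ω).PosSemidef ∧ (X k ω).trace = 1)
    (hmarkov : ∀ (k : ℕ) (f : Matrix (Fin d) (Fin d) ℂ → ℝ), Measurable f →
      (∃ C, ∀ ρ, |f ρ| ≤ C) →
      P[(fun ω => f (X (k + 1) ω)) | ℱ k] =ᵐ[P]
        fun ω => ∑ μ, if 0 < pMeas M (X k ω) μ then
          pMeas M (X k ω) μ * f (MMap M μ (X k ω)) else 0) :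
    ∀ᵐ ω ∂P, ∃ n : Fin d,
      Tendsto (fun k => X k ω) atTop (nhds (Matrix.single n n 1)) := by
  have hmarkov' (f) (hf : Measurable f) (hb : ∃ C, ∀ ρ, |f ρ| ≤ C) :
      HasStepExpectation P ℱ X M f :=
    fun k => hmarkov k f hf hb
  filter_upwards [ae_all_iff.mpr
      (ae_exists_tendsto_re_apply_self hQND hKraus hadapted hD hmarkov'),
    ae_all_iff.mpr fun n₁ => ae_all_iff.mpr fun n₂ => eventually_imp_distrib_left.mpr
      fun hne =>
        ae_tendsto_sqrt_re_mul_re_zero hQND hKraus hadapted hD hmarkov' (hdist n₁ n₂ hne)]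
    with ω hdiag hoff
  exact exists_tendsto_single_of_tendsto_diag (hD · ω) hdiag hoff

/-- Open-loop convergence, Theorem 1, part 1: under the QND and
distinguishability assumptions, the open-loop measurement process converges almost surely
(entrywise) to some basis projector `|n⟩⟨n|`. -/
theorem stmt_5 (d m : ℕ) (hd : 1 ≤ d) (hm : 1 ≤ m)
    (M : Fin m → Matrix (Fin d) (Fin d) ℂ) (c : Fin m → Fin d → ℂ)
    (hQND : ∀ μ, M μ = Matrix.diagonal (c μ))
    (hKraus : ∑ μ, (M μ)ᴴ * M μ = 1)
    (hdist : ∀ n₁ n₂ : Fin d, n₁ ≠ n₂ →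
      ∃ μ, Complex.normSq (c μ n₁) ≠ Complex.normSq (c μ n₂))
    (Ω : Type*) (m0 : MeasurableSpace Ω) (P : Measure Ω) [IsProbabilityMeasure P]
    (ℱ : Filtration ℕ m0)
    (X : ℕ → Ω → Matrix (Fin d) (Fin d) ℂ)
    (hadapted : Adapted ℱ X)
    (hD : ∀ k ω, (X k ω).PosSemidef ∧ (X k ω).trace = 1)
    (hmarkov : ∀ (k : ℕ) (f : Matrix (Fin d) (Fin d) ℂ → ℝ), Measurable f →
      (∃ C, ∀ ρ, |f ρ| ≤ C) →
      P[(fun ω => f (X (k + 1) ω)) | ℱ k] =ᵐ[P]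
        fun ω => ∑ μ, if 0 < pMeas M (X k ω) μ then
          pMeas M (X k ω) μ * f (MMap M μ (X k ω)) else 0) :
    ∀ᵐ ω ∂P, ∃ n : Fin d,
      Tendsto (fun k => X k ω) atTop (nhds (Matrix.single n n 1)) :=
  stmt_5_general d m M c hQND hKraus hdist Ω m0 P ℱ X hadapted hD hmarkov
end

section
/- Let σ ∈ ℝ^d, ε > 0, and define W_ε(ρ) = Σ_{n=1}^d (σ_n ⟨n|ρ|n⟩ + (ε/4)(⟨n|ρ|n⟩)²). Then for every n ∈ {1,…,d}, the real function u ↦ W_ε(e^{−iuH} |n⟩⟨n| e^{iuH}) has vanishing first derivative at u = 0, and its second derivative at u = 0 equals −(R^H σ)_n + ε((⟨n|H|n⟩)² − ⟨n|H²|n⟩). -/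
open Matrix BigOperators

/-- `U_u = e^{−iuH}`, the matrix exponential of `−iuH`. -/
noncomputable def Uu {d : ℕ} (H : Matrix (Fin d) (Fin d) ℂ) (u : ℝ) :
    Matrix (Fin d) (Fin d) ℂ :=
  NormedSpace.exp ((-(Complex.I * (u : ℂ))) • H)

/-- The Laplacian matrix `R^H` with entries
`R^H_{n₁,n₂} = 2(δ_{n₁,n₂}⟨n₁|H²|n₂⟩ − |⟨n₁|H|n₂⟩|²)`. -/
noncomputable def RH {d : ℕ} (H : Matrix (Fin d) (Fin d) ℂ) : Matrix (Fin d) (Fin d) ℝ :=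
  Matrix.of fun n₁ n₂ =>
    2 * ((if n₁ = n₂ then ((H * H) n₁ n₂).re else 0) - Complex.normSq (H n₁ n₂))

/-- `W_ε(ρ) = Σ_n (σ_n ⟨n|ρ|n⟩ + (ε/4)(⟨n|ρ|n⟩)²)`. -/
noncomputable def Weps {d : ℕ} (σ : Fin d → ℝ) (ε : ℝ)
    (ρ : Matrix (Fin d) (Fin d) ℂ) : ℝ :=
  ∑ k, (σ k * (ρ k k).re + (ε / 4) * (ρ k k).re ^ 2)

/-!
With `A = -iH` and `P = |n⟩⟨n|`, the state `ρ(u) = e^{uA} P e^{-uA}` solves `ρ' = ⁅A, ρ⁆`, so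
`ρ'(0) = ⁅A, P⁆` and `ρ''(0) = ⁅A, ⁅A, P⁆⁆`. The commutator with the rank-one projection `P` has
zero diagonal, while the diagonal of the double commutator is the `n`-th row of `-R^H`; hermiticity
enters through `H_{kn} H_{nk} = |H_{nk}|²`. As `W_ε` is quadratic in the diagonal of `ρ`, the chain
rule gives `W' = ∑ₖ (σₖ + ε/2 ρₖₖ) ρ'ₖₖ`, which vanishes at `0`, and
`W''(0) = ∑ₖ (σₖ + ε/2 δₖₙ) (-R^H_{nk})`.
-/

open NormedSpace

attribute [local instance] Matrix.linftyOpNormedAddCommGroup Matrix.linftyOpNormedSpace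
  Matrix.linftyOpNormedRing Matrix.linftyOpNormedAlgebra

lemma HasDerivAt.matrix_re_apply {m n : Type*} [Fintype m] [Fintype n]
    {ρ : ℝ → Matrix m n ℂ} {ρ' : Matrix m n ℂ} {u : ℝ} (h : HasDerivAt ρ ρ' u) (k : m) (l : n) :
    HasDerivAt (fun v => (ρ v k l).re) (ρ' k l).re u :=
  (LinearMap.toContinuousLinearMap
    (Complex.reLm ∘ₗ Matrix.entryLinearMap ℝ ℂ k l)).hasFDerivAt.comp_hasDerivAt u h

theorem hasDerivAt_exp_smul_mul_mul_exp_smul_neg {𝕂 𝔸 : Type*} [RCLike 𝕂] [NormedRing 𝔸]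
    [NormedAlgebra 𝕂 𝔸] [CompleteSpace 𝔸] (A P : 𝔸) (u : 𝕂) :
    HasDerivAt (fun v : 𝕂 => exp (v • A) * P * exp (v • -A))
      ⁅A, exp (u • A) * P * exp (u • -A)⁆ u := by
  refine (((hasDerivAt_exp_smul_const' A u).mul_const P).fun_mul
    (hasDerivAt_exp_smul_const (-A) u)).congr_deriv ?_
  rw [Ring.lie_def]
  noncomm_ring

lemma HasDerivAt.const_lie {𝕂 𝔸 : Type*} [NontriviallyNormedField 𝕂] [NormedRing 𝔸]
    [NormedAlgebra 𝕂 𝔸] {f : 𝕂 → 𝔸} {f' : 𝔸} {u : 𝕂} (A : 𝔸) (h : HasDerivAt f f' u) :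
    HasDerivAt (fun v => ⁅A, f v⁆) ⁅A, f'⁆ u := by
  simp only [Ring.lie_def]
  exact (h.const_mul A).sub (h.mul_const A)

section Weps

variable {d : ℕ} (σ : Fin d → ℝ) (ε : ℝ)

theorem hasDerivAt_Weps {ρ : ℝ → Matrix (Fin d) (Fin d) ℂ} {ρ' : Matrix (Fin d) (Fin d) ℂ}
    {u : ℝ} (h : HasDerivAt ρ ρ' u) :
    HasDerivAt (fun v => Weps σ ε (ρ v)) (∑ k, (σ k + ε / 2 * (ρ u k k).re) * (ρ' k k).re) u := by
  refine (HasDerivAt.fun_sum fun k _ => ((h.matrix_re_apply k k).const_mul (σ k)).add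
    (((h.matrix_re_apply k k).pow 2).const_mul (ε / 4))).congr_deriv ?_
  refine Finset.sum_congr rfl fun k _ => ?_
  push_cast
  ring

theorem hasDerivAt_deriv_Weps {ρ ρ' : ℝ → Matrix (Fin d) (Fin d) ℂ}
    {ρ'' : Matrix (Fin d) (Fin d) ℂ} {u : ℝ} (hρ : ∀ v, HasDerivAt ρ (ρ' v) v)
    (hρ' : HasDerivAt ρ' ρ'' u) :
    HasDerivAt (deriv fun v => Weps σ ε (ρ v))
      (∑ k, (ε / 2 * (ρ' u k k).re ^ 2 + (σ k + ε / 2 * (ρ u k k).re) * (ρ'' k k).re)) u := by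
  rw [funext fun v => (hasDerivAt_Weps σ ε (hρ v)).deriv]
  refine (HasDerivAt.fun_sum fun k _ =>
    ((((hρ u).matrix_re_apply k k).const_mul (ε / 2)).const_add (σ k)).mul
      (hρ'.matrix_re_apply k k)).congr_deriv ?_
  refine Finset.sum_congr rfl fun k _ => ?_
  ring

end Weps

section Single

variable {m α : Type*} [Fintype m] [DecidableEq m]

lemma lie_single_apply_self [Ring α] (A : Matrix m m α) (n k : m) :
    ⁅A, Matrix.single n n (1 : α)⁆ k k = 0 := by
  by_cases hk : k = n
  · subst hk; simp [Ring.lie_def]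
  · simp [Ring.lie_def, hk]

lemma mul_single_mul_apply [Semiring α] (A B : Matrix m m α) (a b : m) (c : α) (i j : m) :
    (A * Matrix.single a b c * B) i j = A i a * c * B b j := by
  simp [Matrix.mul_apply, Matrix.single_apply, ite_and, Finset.sum_ite_eq, ite_mul]

end Single

section Hermitian

variable {d : ℕ} {H : Matrix (Fin d) (Fin d) ℂ}

lemma Uu_eq_exp_smul (u : ℝ) :
    Uu H u = exp (u • (-Complex.I • H)) := by
  rw [Uu, ← Complex.coe_smul, smul_smul]
  congr 2
  ring

lemma conjTranspose_Uu (hH : H.IsHermitian) (u : ℝ) :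
    (Uu H u)ᴴ = exp (u • -(-Complex.I • H)) := by
  rw [Uu, ← Matrix.exp_conjTranspose, conjTranspose_smul, hH, ← Complex.coe_smul, neg_smul,
    neg_neg, smul_smul]
  simp [mul_comm]

lemma Uu_mul_mul_conjTranspose_Uu (hH : H.IsHermitian) (P : Matrix (Fin d) (Fin d) ℂ) (u : ℝ) :
    Uu H u * P * (Uu H u)ᴴ = exp (u • (-Complex.I • H)) * P * exp (u • -(-Complex.I • H)) := by
  rw [conjTranspose_Uu hH, Uu_eq_exp_smul]

lemma re_lie_lie_single_apply_self (hH : H.IsHermitian) (n k : Fin d) :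
    (⁅-Complex.I • H, ⁅-Complex.I • H, Matrix.single n n (1 : ℂ)⁆⁆ k k).re = -RH H n k := by
  have hlie : ∀ P : Matrix (Fin d) (Fin d) ℂ,
      ⁅-Complex.I • H, ⁅-Complex.I • H, P⁆⁆ = (2 : ℝ) • (H * P * H) - H * H * P - P * (H * H) := by
    intro P
    simp only [Ring.lie_def, smul_mul_assoc, mul_smul_comm, mul_sub, sub_mul, smul_smul,
      mul_assoc, smul_sub, neg_mul_neg, Complex.I_mul_I]
    module
  rw [hlie, Matrix.sub_apply, Matrix.sub_apply, Matrix.smul_apply, mul_single_mul_apply, mul_one,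
    ← hH.apply k n, Complex.star_def, ← Complex.normSq_eq_conj_mul_self, RH, of_apply]
  by_cases hk : k = n
  · subst hk
    rw [Matrix.mul_single_apply_same, Matrix.single_mul_apply_same, mul_one, one_mul, if_pos rfl]
    simp only [Complex.sub_re, Complex.smul_re, Complex.ofReal_re, smul_eq_mul]
    ring
  · rw [Matrix.mul_single_apply_of_ne _ _ _ _ _ hk, Matrix.single_mul_apply_of_ne _ _ _ _ _ hk,
      if_neg (Ne.symm hk)]
    simp only [Complex.sub_re, Complex.smul_re, Complex.ofReal_re, Complex.zero_re, smul_eq_mul]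
    ring

lemma RH_apply_self (hH : H.IsHermitian) (n : Fin d) :
    RH H n n = 2 * (((H * H) n n).re - (H n n).re ^ 2) := by
  have him : (H n n).im = 0 := Complex.conj_eq_iff_im.mp (hH.apply n n)
  rw [RH, of_apply, if_pos rfl, Complex.normSq_apply, him]
  ring

end Hermitian

theorem stmt_14_general (d : ℕ) (H : Matrix (Fin d) (Fin d) ℂ)
    (hH : H.IsHermitian) (σ : Fin d → ℝ) (ε : ℝ) (n : Fin d) :
    HasDerivAt
      (fun u : ℝ => Weps σ ε (Uu H u * Matrix.single n n 1 * (Uu H u)ᴴ))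
      0 0 ∧
    HasDerivAt
      (deriv (fun u : ℝ =>
        Weps σ ε (Uu H u * Matrix.single n n 1 * (Uu H u)ᴴ)))
      (-((RH H).mulVec σ n) + ε * ((H n n).re ^ 2 - ((H * H) n n).re)) 0 := by
  have hsum : ∑ k, (σ k + ε / 2 * (Matrix.single n n (1 : ℂ) k k).re) * -RH H n k
      = -((RH H).mulVec σ n) + ε * ((H n n).re ^ 2 - ((H * H) n n).re) := by
    simp only [single_apply, and_self, apply_ite Complex.re, Complex.one_re, Complex.zero_re,
      mul_ite, mul_one, mul_zero, add_mul, ite_mul, zero_mul, mul_neg, mul_comm (σ _),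
      Finset.sum_add_distrib, Finset.sum_neg_distrib, Finset.sum_ite_eq, Finset.mem_univ,
      if_true, RH_apply_self hH, mulVec, dotProduct]
    ring
  simp only [Uu_mul_mul_conjTranspose_Uu hH]
  have hρ := hasDerivAt_exp_smul_mul_mul_exp_smul_neg (𝕂 := ℝ) (-Complex.I • H)
    (Matrix.single n n (1 : ℂ))
  refine ⟨(hasDerivAt_Weps σ ε (hρ 0)).congr_deriv ?_,
    (hasDerivAt_deriv_Weps σ ε hρ ((hρ 0).const_lie _)).congr_deriv ?_⟩
  · simp [lie_single_apply_self]
  · simpa only [zero_smul, NormedSpace.exp_zero, one_mul, mul_one, lie_single_apply_self,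
      re_lie_lie_single_apply_self hH, Complex.zero_re, ne_eq, OfNat.ofNat_ne_zero,
      not_false_eq_true, zero_pow, mul_zero, zero_add] using hsum

/-- for any `σ ∈ ℝ^d`, `ε > 0` and any `n`, the real function
`u ↦ W_ε(e^{−iuH}|n⟩⟨n|e^{iuH})` has vanishing first derivative at `u = 0` and second
derivative at `u = 0` equal to `−(R^H σ)_n + ε((⟨n|H|n⟩)² − ⟨n|H²|n⟩)`. -/
theorem stmt_14 (d : ℕ) (hd : 1 ≤ d) (H : Matrix (Fin d) (Fin d) ℂ)
    (hH : H.IsHermitian) (σ : Fin d → ℝ) (ε : ℝ) (hε : 0 < ε) (n : Fin d) :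
    HasDerivAt
      (fun u : ℝ => Weps σ ε (Uu H u * Matrix.single n n 1 * (Uu H u)ᴴ))
      0 0 ∧
    HasDerivAt
      (deriv (fun u : ℝ =>
        Weps σ ε (Uu H u * Matrix.single n n 1 * (Uu H u)ᴴ)))
      (-((RH H).mulVec σ n) + ε * ((H n n).re ^ 2 - ((H * H) n n).re)) 0 :=
  stmt_14_general d H hH σ ε n
end

section
/- Assume the connectivity graph G^H is connected, fix n̄ ∈ {1,…,d} and positive reals λ_n > 0 for n ≠ n̄, set λ_{n̄} = −Σ_{n ≠ n̄} λ_n, let σ ∈ ℝ^d satisfy R^H σ = −λ, and let ε > 0 satisfy λ_n + ε((⟨n|H|n⟩)² − ⟨n|H²|n⟩) > 0 for all n ≠ n̄. Define W_ε(ρ) = Σ_{n=1}^d (σ_n ⟨n|ρ|n⟩ + (ε/4)(⟨n|ρ|n⟩)²). Then for every n ≠ n̄ and every ū > 0, there exists u with |u| ≤ ū such that W_ε(e^{−iuH} |n⟩⟨n| e^{iuH}) > W_ε(|n⟩⟨n|); that is, u = 0 is a strict local minimum of u ↦ W_ε(e^{−iuH} |n⟩⟨n| e^{iuH}) for every n ≠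 n̄. -/
open Matrix BigOperators

/-- The connectivity graph `G^H`: vertices `{1,…,d}`, edge between `n₁ ≠ n₂` iff
`⟨n₁|H|n₂⟩ ≠ 0`. -/
def GH {d : ℕ} (H : Matrix (Fin d) (Fin d) ℂ) : SimpleGraph (Fin d) :=
  SimpleGraph.fromRel fun n₁ n₂ => H n₁ n₂ ≠ 0

/-!
Along `u ↦ e^{-iuH}|n⟩⟨n|e^{iuH}` the diagonal entries are the populations
`p_k(u) = |⟨k|e^{-iuH}|n⟩|²`. Since `⟨n|H|n⟩` is real, `p_k'(0) = 0`, and `p_k''(0) = -R^H_{kn}`.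
So `u ↦ W_ε(…)` is critical at `0` with second derivative
`∑_k (σ_k + (ε/2) δ_{kn}) (-R^H_{kn}) = λ_n + ε((⟨n|H|n⟩)² - ⟨n|H²|n⟩) > 0`,
using the symmetry of `R^H` and `R^H σ = -λ`; by the mean value theorem `W_ε` then increases
strictly on some `(0, ū]`.
-/

-- Any algebra norm on matrices will do: it only serves to differentiate `Uu`, whose definition
-- does not depend on it.
attribute [local instance] Matrix.linftyOpNormedRing Matrix.linftyOpNormedAlgebra

open scoped InnerProductSpace

theorem exists_abs_le_lt_of_hasDerivAt_deriv_pos {F F' : ℝ → ℝ} {c r : ℝ}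
    (hF : ∀ u, HasDerivAt F (F' u) u) (hF'0 : F' 0 = 0) (hF' : HasDerivAt F' c 0) (hc : 0 < c)
    (hr : 0 < r) : ∃ u, |u| ≤ r ∧ F 0 < F u := by
  obtain ⟨δ, hδ, hsign⟩ := Metric.eventually_nhds_iff.1 <|
    eventually_nhdsWithin_sign_eq_of_deriv_pos (hF'.deriv ▸ hc) hF'0
  set u := min r (δ / 2)
  have hu : 0 < u := lt_min hr (half_pos hδ)
  obtain ⟨ξ, hξ, hslope⟩ := exists_hasDerivAt_eq_slope F F' hu
    (HasDerivAt.continuousOn fun x _ => hF x) fun x _ => hF x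
  have hξδ : dist ξ 0 < δ := by
    rw [Real.dist_eq, sub_zero, abs_of_pos hξ.1]
    linarith [hξ.2, min_le_right r (δ / 2)]
  have hF'ξ : 0 < F' ξ := by
    rw [← sign_eq_one_iff, hsign hξδ, sub_zero, sign_eq_one_iff]
    exact hξ.1
  refine ⟨u, (abs_of_pos hu).trans_le (min_le_left _ _), ?_⟩
  rw [hslope, sub_zero] at hF'ξ
  exact sub_pos.1 ((div_pos_iff_of_pos_right hu).1 hF'ξ)

theorem exists_abs_le_sum_lt_of_hasDerivAt {ι : Type*} [Fintype ι] (σ : ι → ℝ) (ε : ℝ)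
    {p p' : ι → ℝ → ℝ} {p'' : ι → ℝ} {r : ℝ}
    (hp : ∀ k u, HasDerivAt (p k) (p' k u) u) (hp' : ∀ k, HasDerivAt (p' k) (p'' k) 0)
    (hp'0 : ∀ k, p' k 0 = 0) (hpos : 0 < ∑ k, (σ k + ε / 2 * p k 0) * p'' k) (hr : 0 < r) :
    ∃ u, |u| ≤ r ∧ ∑ k, (σ k * p k 0 + ε / 4 * p k 0 ^ 2) <
      ∑ k, (σ k * p k u + ε / 4 * p k u ^ 2) := by
  refine exists_abs_le_lt_of_hasDerivAt_deriv_pos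
    (F := fun u => ∑ k, (σ k * p k u + ε / 4 * p k u ^ 2))
    (F' := fun u => ∑ k, (σ k + ε / 2 * p k u) * p' k u)
    (fun u => HasDerivAt.fun_sum fun k _ => ?_) (by simp [hp'0])
    (HasDerivAt.fun_sum fun k _ => ?_) hpos hr
  · refine (((hp k u).const_mul (σ k)).fun_add
      (((hp k u).fun_pow 2).const_mul (ε / 4))).congr_deriv ?_
    ring
  · refine ((((hp k 0).const_mul (ε / 2)).const_add (σ k)).fun_mul (hp' k)).congr_deriv ?_
    simp [hp'0]

theorem HasDerivAt.matrix_apply {m : Type*} [Fintype m] [DecidableEq m]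
    {f : ℝ → Matrix m m ℂ} {f' : Matrix m m ℂ} {x : ℝ} (hf : HasDerivAt f f' x) (i j : m) :
    HasDerivAt (fun u => f u i j) (f' i j) x :=
  (entryLinearMap ℝ ℂ i j).toContinuousLinearMap.hasFDerivAt.comp_hasDerivAt x hf

theorem hasDerivAt_two_mul_inner {E : Type*} [NormedAddCommGroup E] [InnerProductSpace ℝ E]
    {a a' : ℝ → E} {a'' : E} {x : ℝ} (ha : HasDerivAt a (a' x) x) (ha' : HasDerivAt a' a'' x) :
    HasDerivAt (fun u => 2 * ⟪a u, a' u⟫_ℝ) (2 * (‖a' x‖ ^ 2 + ⟪a x, a''⟫_ℝ)) x := by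
  refine ((ha.inner ℝ ha').const_mul 2).congr_deriv ?_
  rw [real_inner_self_eq_norm_sq]
  ring

section Population

variable {d : ℕ} (H : Matrix (Fin d) (Fin d) ℂ)

theorem Uu_zero : Uu H 0 = 1 := by
  simp [Uu, NormedSpace.exp_zero]

theorem hasDerivAt_Uu (u : ℝ) : HasDerivAt (Uu H) (Uu H u * (-Complex.I • H)) u := by
  have hUu : Uu H = fun t : ℝ => NormedSpace.exp (t • (-Complex.I • H)) := by
    ext1 t
    rw [Uu, ← smul_assoc, Complex.real_smul]
    congr 2
    ring
  rw [hUu]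
  exact hasDerivAt_exp_smul_const _ u

noncomputable def population (n k : Fin d) (u : ℝ) : ℝ := ‖Uu H u k n‖ ^ 2

noncomputable def populationDeriv (n k : Fin d) (u : ℝ) : ℝ :=
  2 * ⟪Uu H u k n, (Uu H u * (-Complex.I • H)) k n⟫_ℝ

theorem hasDerivAt_population (n k : Fin d) (u : ℝ) :
    HasDerivAt (population H n k) (populationDeriv H n k u) u :=
  ((hasDerivAt_Uu H u).matrix_apply k n).norm_sq

theorem hasDerivAt_populationDeriv_zero (n k : Fin d) :
    HasDerivAt (populationDeriv H n k) (-RH H k n) 0 := by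
  refine (hasDerivAt_two_mul_inner ((hasDerivAt_Uu H 0).matrix_apply k n)
    (((hasDerivAt_Uu H 0).mul_const (-Complex.I • H)).matrix_apply k n)).congr_deriv ?_
  have hsq : -Complex.I • H * -Complex.I • H = -(H * H) := by
    rw [smul_mul_smul, neg_mul_neg, Complex.I_mul_I, neg_one_smul]
  rw [Uu_zero, one_mul, hsq]
  by_cases hkn : k = n
  · subst hkn
    simp only [Matrix.smul_apply, smul_eq_mul, neg_mul, norm_neg, Complex.norm_mul,
      Complex.norm_I, one_mul, Complex.sq_norm, one_apply_eq, Matrix.neg_apply, inner_neg_right,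
      Complex.inner, map_one, mul_one, RH, of_apply, ↓reduceIte]
    ring
  · simp [RH, hkn, Complex.sq_norm]

theorem populationDeriv_zero (hH : H.IsHermitian) (n k : Fin d) :
    populationDeriv H n k 0 = 0 := by
  rw [populationDeriv, Uu_zero, one_mul]
  by_cases hkn : k = n
  · subst hkn
    have him : (H k k).im = 0 := Complex.conj_eq_iff_im.1 (hH.apply k k)
    simp [Complex.inner, him]
  · simp [hkn]

end Population

theorem Weps_mul_single_mul_conjTranspose {d : ℕ} (σ : Fin d → ℝ) (ε : ℝ)
    (U : Matrix (Fin d) (Fin d) ℂ) (n : Fin d) :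
    Weps σ ε (U * single n n 1 * Uᴴ) = ∑ k, (σ k * ‖U k n‖ ^ 2 + ε / 4 * (‖U k n‖ ^ 2) ^ 2) := by
  refine Finset.sum_congr rfl fun k _ => ?_
  have hdiag : (U * single n n 1 * Uᴴ : Matrix (Fin d) (Fin d) ℂ) k k = (‖U k n‖ ^ 2 : ℝ) := by
    simp [Matrix.mul_apply, Matrix.single_apply, ite_and, Complex.mul_conj, Complex.sq_norm]
  rw [hdiag, Complex.ofReal_re]

theorem isSymm_RH {d : ℕ} {H : Matrix (Fin d) (Fin d) ℂ} (hH : H.IsHermitian) :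
    (RH H).IsSymm := by
  refine IsSymm.ext fun i j => ?_
  by_cases hij : i = j
  · rw [hij]
  · simp [RH, hij, Ne.symm hij, ← hH.apply i j]

theorem sum_mul_neg_RH_eq {d : ℕ} {H : Matrix (Fin d) (Fin d) ℂ} (hH : H.IsHermitian)
    {σ lam : Fin d → ℝ} (hσ : (RH H).mulVec σ = -lam) (ε : ℝ) (n : Fin d) :
    ∑ k, (σ k + ε / 2 * population H n k 0) * -RH H k n =
      lam n + ε * ((H n n).re ^ 2 - ((H * H) n n).re) := by
  have him : (H n n).im = 0 := Complex.conj_eq_iff_im.1 (hH.apply n n)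
  have hpop (k : Fin d) : population H n k 0 = if k = n then 1 else 0 := by
    by_cases hkn : k = n <;> simp [population, Uu_zero, one_apply, hkn]
  calc ∑ k, (σ k + ε / 2 * population H n k 0) * -RH H k n
      = ∑ k, σ k * -RH H k n + ∑ k, ε / 2 * population H n k 0 * -RH H k n := by
        simp only [add_mul, Finset.sum_add_distrib]
    _ = -(σ ᵥ* RH H) n - ε / 2 * RH H n n := by
        simp [hpop, vecMul, dotProduct, sub_eq_add_neg]
    _ = lam n + ε * ((H n n).re ^ 2 - ((H * H) n n).re) := by
        rw [← mulVec_transpose, isSymm_RH hH, hσ]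
        simp only [Pi.neg_apply, neg_neg, RH, Complex.normSq_apply, of_apply, ↓reduceIte, him,
          mul_zero, add_zero]
        ring

theorem stmt_15_general (d : ℕ) (H : Matrix (Fin d) (Fin d) ℂ)
    (hH : H.IsHermitian)
    (nbar : Fin d) (lam : Fin d → ℝ)
    (σ : Fin d → ℝ) (hσ : (RH H).mulVec σ = -lam)
    (ε : ℝ)
    (hεsmall : ∀ n, n ≠ nbar →
      0 < lam n + ε * ((H n n).re ^ 2 - ((H * H) n n).re)) :
    ∀ n, n ≠ nbar → ∀ ubar : ℝ, 0 < ubar →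
      ∃ u : ℝ, |u| ≤ ubar ∧
        Weps σ ε (Uu H u * Matrix.single n n 1 * (Uu H u)ᴴ) >
          Weps σ ε (Matrix.single n n 1) := by
  intro n hn ubar hubar
  obtain ⟨u, hu, hlt⟩ := exists_abs_le_sum_lt_of_hasDerivAt σ ε (hasDerivAt_population H n)
    (hasDerivAt_populationDeriv_zero H n) (populationDeriv_zero H hH n)
    ((sum_mul_neg_RH_eq hH hσ ε n).symm ▸ hεsmall n hn) hubar
  have hsingle : single n n 1 = Uu H 0 * single n n 1 * (Uu H 0)ᴴ := by simp [Uu_zero]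
  refine ⟨u, hu, ?_⟩
  rw [gt_iff_lt, Weps_mul_single_mul_conjTranspose, hsingle, Weps_mul_single_mul_conjTranspose]
  exact hlt

/-- under the hypotheses of Theorem 3, for every `n ≠ n̄` and every `ū > 0`
there exists `u` with `|u| ≤ ū` such that
`W_ε(e^{−iuH}|n⟩⟨n|e^{iuH}) > W_ε(|n⟩⟨n|)`. -/
theorem stmt_15 (d : ℕ) (hd : 1 ≤ d) (H : Matrix (Fin d) (Fin d) ℂ)
    (hH : H.IsHermitian) (hconn : (GH H).Connected)
    (nbar : Fin d) (lam : Fin d → ℝ)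
    (hpos : ∀ n, n ≠ nbar → 0 < lam n)
    (hbar : lam nbar = -∑ n ∈ Finset.univ.erase nbar, lam n)
    (σ : Fin d → ℝ) (hσ : (RH H).mulVec σ = -lam)
    (ε : ℝ) (hε : 0 < ε)
    (hεsmall : ∀ n, n ≠ nbar →
      0 < lam n + ε * ((H n n).re ^ 2 - ((H * H) n n).re)) :
    ∀ n, n ≠ nbar → ∀ ubar : ℝ, 0 < ubar →
      ∃ u : ℝ, |u| ≤ ubar ∧
        Weps σ ε (Uu H u * Matrix.single n n 1 * (Uu H u)ᴴ) >
          Weps σ ε (Matrix.single n n 1) :=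
  stmt_15_general d H hH nbar lam σ hσ ε hεsmall
end
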